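/- arXiv:2310.08545 — 3 statements merged into one kernel-verified Lean document; each statement's English description precedes it below -/
import Mathlib

section
/- The formal delta function admits the elliptic partial-fraction expansion δ(x)/(p;p)_∞^2 = [1/θ(x;p)]_+ + [x^{-1}/θ(x^{-1};p)]_−, where the first term is expanded in nonnegative powers of x using 1/θ(x;p) = 1/((1−x)(xp;p)_∞(px^{-1};p)_∞) and the recursion, and the second in negative powers of x. -/
/-!
Write `θ(x;p) = (1 - x) Θ(x)` with `Θ(x) = (px;p)_∞ (px⁻¹;p)_∞`. The function `Θ` is holomorphic
and zero-free on the annulus `‖p‖ < ‖x‖ < ‖p‖⁻¹` and satisfies `Θ(x⁻¹) = Θ(x)`, so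
`x⁻¹/θ(x⁻¹;p) = 1/((x - 1) Θ(x)) = -1/θ(x;p)`. Both coefficients are therefore integrals of the
same function `x^(-n-1) / ((x - 1) Θ(x))`, over `|x| = R` and (with a minus sign) over `|x| = r`.
Their sum is the residue at the only pole `x = 1` in between, `1/Θ(1) = 1/(p;p)_∞²`.
-/

/-- The infinite q-Pochhammer symbol `(z;p)_∞ = ∏_{m=0}^∞ (1 − z p^m)`. -/
noncomputable def qPochInf (z p : ℂ) : ℂ := ∏' m : ℕ, (1 - z * p ^ m)

/-- The theta function `θ(x;p) = (x;p)_∞ (p x⁻¹;p)_∞`. -/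
noncomputable def thetaFn (x p : ℂ) : ℂ := qPochInf x p * qPochInf (p * x⁻¹) p

open Complex Metric Set Real

section Annulus

variable {E : Type*} [NormedAddCommGroup E] [NormedSpace ℂ E] [CompleteSpace E]

lemma circleIntegral_sub_inv_smul_eq_dslope_add {c w : ℂ} {ρ : ℝ} {f : ℂ → E}
    (hρ : 0 ≤ ρ) (hw : w ∉ sphere c ρ) (hF : ContinuousOn (dslope f w) (sphere c ρ)) :
    (∮ z in C(c, ρ), (z - w)⁻¹ • f z) =
      (∮ z in C(c, ρ), dslope f w z) + (∮ z in C(c, ρ), (z - w)⁻¹) • f w := by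
  have hne : ∀ z ∈ sphere c ρ, z ≠ w := fun z hz h => hw (h ▸ hz)
  have hinv : ContinuousOn (fun z => (z - w)⁻¹) (sphere c ρ) :=
    (continuousOn_id.sub continuousOn_const).inv₀ fun z hz => sub_ne_zero.2 (hne z hz)
  have hconst : CircleIntegrable (fun z => (z - w)⁻¹ • f w) c ρ :=
    (hinv.smul continuousOn_const).circleIntegrable hρ
  rw [← circleIntegral.integral_smul_const,
    ← circleIntegral.integral_add (hF.circleIntegrable hρ) hconst]
  refine circleIntegral.integral_congr hρ fun z hz => ?_
  simp only [dslope_of_ne _ (hne z hz), slope_def_module, smul_sub, sub_add_cancel]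

theorem circleIntegral_sub_inv_smul_sub_of_differentiableOn_annulus {c w : ℂ} {r R : ℝ}
    {f : ℂ → E} {U : Set ℂ} (hr : 0 < r) (hw : w ∈ ball c R \ closedBall c r) (hU : IsOpen U)
    (hsub : closedBall c R \ ball c r ⊆ U) (hf : DifferentiableOn ℂ f U) :
    (∮ z in C(c, R), (z - w)⁻¹ • f z) - (∮ z in C(c, r), (z - w)⁻¹ • f z) =
      (2 * π * I : ℂ) • f w := by
  have hwr : r < dist w c := not_le.1 hw.2
  have hrR : r ≤ R := hwr.le.trans (mem_ball.1 hw.1).le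
  have hopen : ball c R \ closedBall c r ⊆ closedBall c R \ ball c r :=
    sdiff_subset_sdiff ball_subset_closedBall ball_subset_closedBall
  have hF : DifferentiableOn ℂ (dslope f w) U :=
    (differentiableOn_dslope (hU.mem_nhds (hsub (hopen hw)))).2 hf
  have hFR : (∮ z in C(c, R), dslope f w z) = ∮ z in C(c, r), dslope f w z :=
    circleIntegral_eq_of_differentiable_on_annulus_off_countable hr hrR countable_empty
      (hF.continuousOn.mono hsub)
      fun z hz => hF.differentiableAt (hU.mem_nhds (hsub (hopen hz.1)))
  have hinv_r : (∮ z in C(c, r), (z - w)⁻¹) = 0 :=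
    circleIntegral_eq_zero_of_differentiable_on_off_countable hr.le countable_empty
      ((continuousOn_id.sub continuousOn_const).inv₀ fun z hz =>
        sub_ne_zero.2 (ne_of_mem_of_not_mem hz hw.2))
      fun z hz => (differentiableAt_id.sub_const w).inv
        (sub_ne_zero.2 (ne_of_mem_of_not_mem (ball_subset_closedBall hz.1) hw.2))
  have hsphere_r : sphere c r ⊆ U := fun z hz =>
    hsub ⟨closedBall_subset_closedBall hrR (sphere_subset_closedBall hz),
      not_lt.2 (mem_sphere.1 hz).ge⟩
  have hsphere_R : sphere c R ⊆ U := fun z hz =>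
    hsub ⟨sphere_subset_closedBall hz, not_lt.2 (mem_sphere.1 hz ▸ hrR)⟩
  rw [circleIntegral_sub_inv_smul_eq_dslope_add (hr.trans_le hrR).le
      (fun h => (mem_ball.1 hw.1).ne (mem_sphere.1 h)) (hF.continuousOn.mono hsphere_R),
    circleIntegral_sub_inv_smul_eq_dslope_add hr.le (fun h => hw.2 (sphere_subset_closedBall h))
      (hF.continuousOn.mono hsphere_r),
    hFR, hinv_r, circleIntegral.integral_sub_inv_of_mem_ball hw.1, zero_smul, add_zero,
    add_sub_cancel_left]

end Annulus

namespace qPochInf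

variable {p : ℂ}

lemma summable_norm_mul_pow (hp : ‖p‖ < 1) (z : ℂ) : Summable fun m : ℕ => ‖z * p ^ m‖ := by
  simpa [norm_mul, norm_pow] using
    (summable_geometric_of_lt_one (norm_nonneg p) hp).mul_left ‖z‖

lemma multipliable (hp : ‖p‖ < 1) (z : ℂ) : Multipliable fun m : ℕ => 1 - z * p ^ m := by
  simpa [sub_eq_add_neg] using
    multipliable_one_add_of_summable (f := fun m : ℕ => -(z * p ^ m))
      (by simpa using summable_norm_mul_pow hp z)

lemma ne_zero (hp : ‖p‖ < 1) {z : ℂ} (hz : ∀ m : ℕ, z * p ^ m ≠ 1) : qPochInf z p ≠ 0 := by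
  simpa [qPochInf, sub_eq_add_neg] using
    tprod_one_add_ne_zero_of_summable (f := fun m : ℕ => -(z * p ^ m))
      (fun m => by rw [← sub_eq_add_neg]; exact sub_ne_zero.mpr (hz m).symm)
      (by simpa using summable_norm_mul_pow hp z)

lemma ne_zero_of_norm_lt_one {z : ℂ} (hp : ‖p‖ < 1) (hz : ‖z‖ < 1) :
    qPochInf z p ≠ 0 :=
  ne_zero hp fun m h => by
    have : ‖z * p ^ m‖ < 1 := by
      rw [norm_mul, norm_pow]
      exact mul_lt_one_of_nonneg_of_lt_one_left (norm_nonneg z) hz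
        (pow_le_one₀ (norm_nonneg p) hp.le)
    simp [h] at this

lemma eq_one_sub_mul (hp : ‖p‖ < 1) (z : ℂ) : qPochInf z p = (1 - z) * qPochInf (z * p) p := by
  rw [qPochInf, tprod_eq_zero_mul' ((multipliable hp (z * p)).congr fun m => by ring)]
  simp only [pow_zero, mul_one, qPochInf, pow_succ, mul_assoc, mul_comm p]

lemma differentiable (hp : ‖p‖ < 1) : Differentiable ℂ fun z => qPochInf z p := by
  intro z
  set ρ := ‖z‖ + 1
  have hprod : HasProdLocallyUniformlyOn (fun m w => 1 + -(w * p ^ m))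
      (fun w => ∏' m, (1 + -(w * p ^ m))) (ball 0 ρ) :=
    Summable.hasProdLocallyUniformlyOn_nat_one_add isOpen_ball
      ((summable_geometric_of_lt_one (norm_nonneg p) hp).mul_left ρ)
      (.of_forall fun m w hw => by
        simpa [norm_mul, norm_pow] using
          mul_le_mul_of_nonneg_right (mem_ball_zero_iff.mp hw).le (by positivity))
      (fun m => by fun_prop)
  have hd := hprod.differentiableOn (.of_forall fun s => by
      simpa [Finset.prod_fn] using DifferentiableOn.finsetProd (fun _ _ => by fun_prop)) isOpen_ball
  simpa [qPochInf, sub_eq_add_neg] using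
    hd.differentiableAt (isOpen_ball.mem_nhds (by simp [ρ]))

end qPochInf

noncomputable def reducedTheta (x p : ℂ) : ℂ := qPochInf (p * x) p * qPochInf (p * x⁻¹) p

section Theta

variable {p : ℂ}

lemma thetaFn_eq_one_sub_mul (hp : ‖p‖ < 1) (x : ℂ) :
    thetaFn x p = (1 - x) * reducedTheta x p := by
  rw [thetaFn, qPochInf.eq_one_sub_mul hp x, reducedTheta, mul_comm x p, mul_assoc]

lemma reducedTheta_inv (x : ℂ) : reducedTheta x⁻¹ p = reducedTheta x p := by
  rw [reducedTheta, reducedTheta, inv_inv, mul_comm]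

lemma inv_thetaFn (hp : ‖p‖ < 1) (x : ℂ) :
    (thetaFn x p)⁻¹ = -((x - 1)⁻¹ * (reducedTheta x p)⁻¹) := by
  rw [thetaFn_eq_one_sub_mul hp, mul_inv, ← neg_sub x 1, inv_neg, neg_mul]

lemma inv_mul_inv_thetaFn_inv (hp : ‖p‖ < 1) {x : ℂ} (hx : x ≠ 0) :
    x⁻¹ * (thetaFn x⁻¹ p)⁻¹ = (x - 1)⁻¹ * (reducedTheta x p)⁻¹ := by
  rw [thetaFn_eq_one_sub_mul hp, reducedTheta_inv, ← mul_inv, ← mul_inv, ← mul_assoc, mul_sub,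
    mul_one, mul_inv_cancel₀ hx]

def thetaAnnulus (p : ℂ) : Set ℂ := {x | ‖p‖ < ‖x‖ ∧ ‖x‖ < ‖p‖⁻¹}

lemma isOpen_thetaAnnulus (p : ℂ) : IsOpen (thetaAnnulus p) :=
  (isOpen_lt continuous_const continuous_norm).inter
    (isOpen_lt continuous_norm continuous_const)

lemma norm_mul_lt_one_of_mem_thetaAnnulus {x : ℂ} (hx : x ∈ thetaAnnulus p) :
    ‖p * x‖ < 1 ∧ ‖p * x⁻¹‖ < 1 := by
  have hx0 : 0 < ‖x‖ := (norm_nonneg p).trans_lt hx.1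
  have hp0 : 0 < ‖p‖ := inv_pos.1 (hx0.trans hx.2)
  rw [norm_mul, norm_mul, norm_inv, ← div_eq_mul_inv, div_lt_one hx0]
  exact ⟨(mul_lt_mul_of_pos_left hx.2 hp0).trans_eq (mul_inv_cancel₀ hp0.ne'), hx.1⟩

lemma reducedTheta_ne_zero (hp : ‖p‖ < 1) {x : ℂ} (hx : x ∈ thetaAnnulus p) :
    reducedTheta x p ≠ 0 :=
  mul_ne_zero (qPochInf.ne_zero_of_norm_lt_one hp (norm_mul_lt_one_of_mem_thetaAnnulus hx).1)
    (qPochInf.ne_zero_of_norm_lt_one hp (norm_mul_lt_one_of_mem_thetaAnnulus hx).2)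

lemma differentiableOn_reducedTheta (hp : ‖p‖ < 1) :
    DifferentiableOn ℂ (fun x => reducedTheta x p) {0}ᶜ := fun x hx =>
  (((qPochInf.differentiable hp).comp (differentiable_const p |>.mul differentiable_id) x).mul
    ((qPochInf.differentiable hp _).comp x
      ((differentiableAt_const p).mul (differentiableAt_inv hx)))).differentiableWithinAt

end Theta

/-- `[·]₊` and `[·]₋` are read off as Laurent coefficients, i.e. contour integrals over `|x| = r`
in `‖p‖ < |x| < 1` and over `|x| = R` in `1 < |x| < ‖p‖⁻¹`, the annuli where the two expansions
converge; every coefficient of `δ(x)` is `1`. -/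
theorem delta_theta_expansion_general (p : ℂ)
    (r R : ℝ) (hr1 : ‖p‖ < r) (hr2 : r < 1) (hR1 : 1 < R) (hR2 : R < ‖p‖⁻¹) (n : ℤ) :
    (2 * (Real.pi : ℂ) * Complex.I)⁻¹ *
        (∮ x in C(0, r), x ^ (-n - 1) * (thetaFn x p)⁻¹) +
      (2 * (Real.pi : ℂ) * Complex.I)⁻¹ *
        (∮ x in C(0, R), x ^ (-n - 1) * (x⁻¹ * (thetaFn x⁻¹ p)⁻¹)) =
      (qPochInf p p ^ 2)⁻¹ := by
  have hp : ‖p‖ < 1 := hr1.trans hr2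
  have hr0 : 0 < r := (norm_nonneg p).trans_lt hr1
  set φ : ℂ → ℂ := fun x => x ^ (-n - 1) * (reducedTheta x p)⁻¹
  have hφ : DifferentiableOn ℂ φ (thetaAnnulus p) := fun x hx =>
    have hx0 : x ≠ 0 := norm_pos_iff.1 ((norm_nonneg p).trans_lt hx.1)
    ((differentiableAt_zpow.2 (.inl hx0)).mul
      (((differentiableOn_reducedTheta hp).differentiableAt
        (isOpen_compl_singleton.mem_nhds hx0)).inv
        (reducedTheta_ne_zero hp hx))).differentiableWithinAt
  have hsub : closedBall 0 R \ ball 0 r ⊆ thetaAnnulus p := fun x ⟨hxR, hxr⟩ =>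
    ⟨hr1.trans_le (not_lt.1 (mt mem_ball_zero_iff.2 hxr)),
      (mem_closedBall_zero_iff.1 hxR).trans_lt hR2⟩
  have key := circleIntegral_sub_inv_smul_sub_of_differentiableOn_annulus hr0
    (w := 1) (by simp [hR1, hr2]) (isOpen_thetaAnnulus p) hsub hφ
  have h_inner : (∮ x in C(0, r), x ^ (-n - 1) * (thetaFn x p)⁻¹) =
      -1 * ∮ x in C(0, r), (x - 1)⁻¹ • φ x := by
    rw [← circleIntegral.integral_const_mul]
    refine circleIntegral.integral_congr hr0.le fun x _ => ?_
    simp only [inv_thetaFn hp, φ, smul_eq_mul]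
    ring
  have h_outer : (∮ x in C(0, R), x ^ (-n - 1) * (x⁻¹ * (thetaFn x⁻¹ p)⁻¹)) =
      ∮ x in C(0, R), (x - 1)⁻¹ • φ x := by
    refine circleIntegral.integral_congr (zero_le_one.trans hR1.le) fun x hx => ?_
    simp only [inv_mul_inv_thetaFn_inv hp (ne_zero_of_mem_sphere (by linarith) ⟨x, hx⟩), φ,
      smul_eq_mul]
    ring
  have hφ1 : φ 1 = (qPochInf p p ^ 2)⁻¹ := by simp [φ, reducedTheta, sq]
  rw [h_inner, h_outer, neg_one_mul, ← mul_add, neg_add_eq_sub, key, smul_eq_mul,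
    inv_mul_cancel_left₀ two_pi_I_ne_zero, hφ1]

/-- Elliptic partial fraction expansion of the formal delta function:
`δ(x)/(p;p)_∞² = [1/θ(x;p)]₊ + [x⁻¹/θ(x⁻¹;p)]₋`.  Coefficientwise, for every `n ∈ ℤ`, the
`n`-th Laurent coefficient of the expansion of `1/θ(x;p)` in the annulus `‖p‖ < |x| < 1`
(where the `+` expansion converges) plus the `n`-th Laurent coefficient of the expansion of
`x⁻¹/θ(x⁻¹;p)` in the annulus `1 < |x| < ‖p‖⁻¹` (where the `−` expansion converges) equals
`1/(p;p)_∞²`, the `n`-th coefficient of `δ(x)/(p;p)_∞²`. -/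
theorem delta_theta_expansion (p : ℂ) (hp : ‖p‖ < 1) (hp0 : p ≠ 0)
    (r R : ℝ) (hr1 : ‖p‖ < r) (hr2 : r < 1) (hR1 : 1 < R) (hR2 : R < ‖p‖⁻¹) (n : ℤ) :
    (2 * (Real.pi : ℂ) * Complex.I)⁻¹ *
        (∮ x in C(0, r), x ^ (-n - 1) * (thetaFn x p)⁻¹) +
      (2 * (Real.pi : ℂ) * Complex.I)⁻¹ *
        (∮ x in C(0, R), x ^ (-n - 1) * (x⁻¹ * (thetaFn x⁻¹ p)⁻¹)) =
      (qPochInf p p ^ 2)⁻¹ :=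
  delta_theta_expansion_general p r R hr1 hr2 hR1 hR2 n
end

section
/- For any Young diagram λ, the Y-function admits a reduced product formula over addable and removable boxes: (1−v/x)·∏_{(i,j)∈λ} 𝒮(v q_1^{i-1} q_2^{j-1}/x) = ∏_{□∈A(λ)}(1 − χ(□)/x) / ∏_{□∈R(λ)}(1 − q_1 q_2 χ(□)/x), where 𝒮(u) = (1−q_1 u)(1−q_2 u)/((1−u)(1−q_1 q_2 u)), χ(□) = v q_1^{i-1} q_2^{j-1} for □ = (i,j), A(λ) is the set of addable boxes of λ, and R(λ) is the set of removable boxes of λ. -/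
/-!
Write `g a b = 1 - v q₁^a q₂^b / x`. Then `𝒮(χ(i,j)/x)` is the plaquette ratio
`g(i+1,j) g(i,j+1) / (g(i,j) g(i+1,j+1))`, so the product over a row telescopes in `j` and
then the product over rows telescopes in `i`, leaving `g(0,0)⁻¹` times a product along the
outer boundary of `λ`. On that boundary the factors of consecutive rows of equal length cancel,
and what survives are exactly the addable corners upstairs and the removable ones downstairs.
Since all the `g a b` are nonzero, the computation takes place in the group of units of `K`.
-/

open Finset

theorem prod_filter_addable {M : Type*} [CommMonoid M] (f : ℕ → M) (l : ℕ → ℕ) (N : ℕ) :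
    ∏ i ∈ (range (N + 1)).filter (fun i => i = 0 ∨ l i < l (i - 1)), f i =
      f 0 * ∏ i ∈ (range N).filter (fun i => l (i + 1) < l i), f (i + 1) := by
  simp only [prod_filter, prod_range_succ', Nat.add_sub_cancel, add_eq_zero, one_ne_zero,
    and_false, false_or, true_or, if_true]
  exact mul_comm _ _

section CommGroup

variable {G : Type*} [CommGroup G] (g : ℕ → ℕ → G)

def plaquetteRatio (i j : ℕ) : G :=
  g (i + 1) j * g i (j + 1) / (g i j * g (i + 1) (j + 1))

theorem prod_range_plaquetteRatio (i m : ℕ) :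
    ∏ j ∈ range m, plaquetteRatio g i j = g i m / g i 0 * (g (i + 1) 0 / g (i + 1) m) := by
  have hsplit : ∀ j, plaquetteRatio g i j =
      g i (j + 1) / g i j * (g (i + 1) j / g (i + 1) (j + 1)) := fun j => by
    rw [plaquetteRatio, mul_comm (g (i + 1) j), mul_div_mul_comm]
  simp only [hsplit, prod_mul_distrib, prod_range_div, prod_range_div']

theorem prod_diagram_plaquetteRatio (l : ℕ → ℕ) (N : ℕ) :
    ∏ i ∈ range N, ∏ j ∈ range (l i), plaquetteRatio g i j =
      g N 0 / g 0 0 * ∏ i ∈ range N, g i (l i) / g (i + 1) (l i) := by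
  have hswap : ∀ i, g i (l i) / g i 0 * (g (i + 1) 0 / g (i + 1) (l i)) =
      g (i + 1) 0 / g i 0 * (g i (l i) / g (i + 1) (l i)) := fun i => by
    rw [div_mul_div_comm, div_mul_div_comm, mul_comm (g i (l i))]
  simp only [prod_range_plaquetteRatio, hswap, prod_mul_distrib, prod_range_div (g · 0)]

theorem prod_boundary_div_eq_prod_filter {l : ℕ → ℕ} (hl : Antitone l) (N : ℕ) :
    (∏ i ∈ range (N + 1), g i (l i)) / ∏ i ∈ range N, g (i + 1) (l i) =
      (∏ i ∈ (range (N + 1)).filter (fun i => i = 0 ∨ l i < l (i - 1)), g i (l i)) /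
        ∏ i ∈ (range N).filter (fun i => l (i + 1) < l i), g (i + 1) (l i) := by
  have hflat : ∀ i ∈ range N,
      g (i + 1) (l (i + 1)) / g (i + 1) (l i) ≠ 1 → l (i + 1) < l i := by
    intro i _ hne
    by_contra hge
    exact hne (by rw [le_antisymm (hl i.le_succ) (not_lt.mp hge), div_self'])
  rw [prod_filter_addable (fun i => g i (l i)), prod_range_succ', mul_comm, mul_div_assoc,
    mul_div_assoc, ← prod_div_distrib, ← prod_div_distrib, prod_filter_of_ne hflat]

theorem shell_formula {l : ℕ → ℕ} (hl : Antitone l) {N : ℕ} (hN : l N = 0) :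
    g 0 0 * ∏ i ∈ range N, ∏ j ∈ range (l i), plaquetteRatio g i j =
      (∏ i ∈ (range (N + 1)).filter (fun i => i = 0 ∨ l i < l (i - 1)), g i (l i)) /
        ∏ i ∈ (range N).filter (fun i => l (i + 1) < l i), g (i + 1) (l i) := by
  rw [← prod_boundary_div_eq_prod_filter g hl, prod_diagram_plaquetteRatio, ← mul_assoc,
    mul_div_cancel, prod_div_distrib, prod_range_succ, hN, mul_comm, div_mul_eq_mul_div]

end CommGroup

/-- Shell formula for the Y-function.  For a Young diagram encoded by a
weakly decreasing sequence `l : ℕ → ℕ` of row lengths (0-indexed rows, vanishing from row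
`N` on), with box content `χ(i,j) = v q₁^i q₂^j` (0-indexed boxes `(i,j)`, `j < l i`),
`𝒮(u) = (1−q₁u)(1−q₂u)/((1−u)(1−q₁q₂u))`,
the addable boxes being the `(i, l i)` with `i = 0` or `l i < l (i−1)` and the removable
boxes being the `(i, l i − 1)` with `l (i+1) < l i` (so that `q₁q₂·χ(i, l i − 1)
= v q₁^{i+1} q₂^{l i}`), we have
`(1−v/x)·∏_{□∈λ} 𝒮(χ(□)/x) = ∏_{□∈A(λ)}(1−χ(□)/x) / ∏_{□∈R(λ)}(1−q₁q₂χ(□)/x)`. -/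
theorem Y_function_shell_formula {K : Type*} [Field K] (q1 q2 v x : K)
    (l : ℕ → ℕ) (N : ℕ) (hmono : ∀ i, l (i + 1) ≤ l i) (hN : ∀ i, N ≤ i → l i = 0)
    (h : ∀ a b : ℕ, (1 : K) - v * q1 ^ a * q2 ^ b / x ≠ 0) :
    (1 - v / x) *
        ∏ i ∈ Finset.range N, ∏ j ∈ Finset.range (l i),
          (((1 - q1 * (v * q1 ^ i * q2 ^ j / x)) * (1 - q2 * (v * q1 ^ i * q2 ^ j / x))) /
            ((1 - v * q1 ^ i * q2 ^ j / x) * (1 - q1 * q2 * (v * q1 ^ i * q2 ^ j / x)))) =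
      (∏ i ∈ (Finset.range (N + 1)).filter (fun i => i = 0 ∨ l i < l (i - 1)),
          (1 - v * q1 ^ i * q2 ^ (l i) / x)) /
        ∏ i ∈ (Finset.range N).filter (fun i => l (i + 1) < l i),
          (1 - v * q1 ^ (i + 1) * q2 ^ (l i) / x) := by
  have key := congrArg Units.val <| shell_formula (fun a b => Units.mk0 _ (h a b))
    (antitone_nat_of_succ_le hmono) (hN N le_rfl)
  simp only [plaquetteRatio, Units.val_mul, Units.val_div_eq_div_val, Units.coe_prod,
    Units.val_mk0] at key
  convert key using 5 <;> ring
end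

section
/- The 5d Nekrasov factor N(v_1,λ | v_2,μ) = ∏_{□∈λ}(1 − q_1q_2 χ_{v_1}(□)/v_2) · ∏_{□∈μ}(1 − v_1/χ_{v_2}(□)) · ∏_{□∈λ, ▪∈μ} 𝒮(χ_{v_1}(□)/χ_{v_2}(▪)) satisfies the recursion N(v_1,λ | v_2,μ+▪)/N(v_1,λ | v_2,μ) = 𝒴_{λ,v_1}(χ_{v_2}(▪)) for any box ▪ addable to μ, where 𝒴_{λ,v}(x) = (1−v/x)∏_{□∈λ}𝒮(χ_v(□)/x). -/
/-- The structure function `𝒮(u) = (1−q₁u)(1−q₂u)/((1−u)(1−q₁q₂u))`. -/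
noncomputable def Sab {K : Type*} [Field K] (q1 q2 u : K) : K :=
  ((1 - q1 * u) * (1 - q2 * u)) / ((1 - u) * (1 - q1 * q2 * u))

/-- The 5d Nekrasov factor
`N(v₁,λ | v₂,μ) = ∏_{□∈λ}(1 − q₁q₂ χ_{v₁}(□)/v₂) · ∏_{▪∈μ}(1 − v₁/χ_{v₂}(▪))
  · ∏_{□∈λ,▪∈μ} 𝒮(χ_{v₁}(□)/χ_{v₂}(▪))`,
for Young diagrams encoded by row-length sequences `l` (rows `< L`) and `m` (rows `< M`),
with 0-indexed box contents `χ_v(i,j) = v q₁^i q₂^j`. -/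
noncomputable def nekrasov5d {K : Type*} [Field K] (q1 q2 v1 v2 : K)
    (l : ℕ → ℕ) (L : ℕ) (m : ℕ → ℕ) (M : ℕ) : K :=
  (∏ i ∈ Finset.range L, ∏ j ∈ Finset.range (l i),
      (1 - q1 * q2 * (v1 * q1 ^ i * q2 ^ j) / v2)) *
    (∏ k ∈ Finset.range M, ∏ o ∈ Finset.range (m k),
      (1 - v1 / (v2 * q1 ^ k * q2 ^ o))) *
    ∏ i ∈ Finset.range L, ∏ j ∈ Finset.range (l i),
      ∏ k ∈ Finset.range M, ∏ o ∈ Finset.range (m k),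
        Sab q1 q2 ((v1 * q1 ^ i * q2 ^ j) / (v2 * q1 ^ k * q2 ^ o))

section aux

variable {K : Type*} [Field K]

lemma prod_update_key (f : ℕ → ℕ → K) (m : ℕ → ℕ) (M r : ℕ) (hr : r ≤ M) (hM : m M = 0) :
    (∏ k ∈ Finset.range (M + 1), ∏ o ∈ Finset.range (Function.update m r (m r + 1) k), f k o)
      = (∏ k ∈ Finset.range M, ∏ o ∈ Finset.range (m k), f k o) * f r (m r) := by
  have hmem : r ∈ Finset.range (M + 1) := Finset.mem_range.mpr (Nat.lt_succ_of_le hr)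
  have h1 : ∀ k, (∏ o ∈ Finset.range (Function.update m r (m r + 1) k), f k o)
      = Function.update (fun k => ∏ o ∈ Finset.range (m k), f k o) r
          ((∏ o ∈ Finset.range (m r), f r o) * f r (m r)) k := by
    intro k
    rcases eq_or_ne k r with rfl | hk
    · simp [Finset.prod_range_succ]
    · simp [Function.update_of_ne hk]
  rw [Finset.prod_congr rfl (fun k _ => h1 k), Finset.prod_update_of_mem hmem,
    ← Finset.erase_eq, mul_right_comm,
    Finset.mul_prod_erase _ (fun k => ∏ o ∈ Finset.range (m k), f k o) hmem,
    Finset.prod_range_succ, hM]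
  simp

lemma hexp (q1 q2 v1 v2 : K) (hq1 : q1 ≠ 0) (hq2 : q2 ≠ 0) (hv2 : v2 ≠ 0)
    (i j k o : ℕ) :
    (v1 * q1 ^ i * q2 ^ j) / (v2 * q1 ^ k * q2 ^ o)
      = v1 / v2 * q1 ^ ((i : ℤ) - k) * q2 ^ ((j : ℤ) - o) := by
  rw [zpow_sub₀ hq1, zpow_sub₀ hq2, zpow_natCast, zpow_natCast, zpow_natCast, zpow_natCast]
  field_simp

lemma Sab_ne (q1 q2 v1 v2 : K) (hq1 : q1 ≠ 0) (hq2 : q2 ≠ 0) (hv2 : v2 ≠ 0)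
    (hgen : ∀ a b : ℤ, (1 : K) - v1 / v2 * q1 ^ a * q2 ^ b ≠ 0) (a b : ℤ) :
    Sab q1 q2 (v1 / v2 * q1 ^ a * q2 ^ b) ≠ 0 := by
  have h1 : q1 * (v1 / v2 * q1 ^ a * q2 ^ b) = v1 / v2 * q1 ^ (a + 1) * q2 ^ b := by
    rw [zpow_add₀ hq1, zpow_one]; ring
  have h2 : q2 * (v1 / v2 * q1 ^ a * q2 ^ b) = v1 / v2 * q1 ^ a * q2 ^ (b + 1) := by
    rw [zpow_add₀ hq2, zpow_one]; ring
  have h3 : q1 * q2 * (v1 / v2 * q1 ^ a * q2 ^ b) = v1 / v2 * q1 ^ (a + 1) * q2 ^ (b + 1) := by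
    rw [zpow_add₀ hq1, zpow_add₀ hq2, zpow_one, zpow_one]; ring
  unfold Sab
  rw [h1, h2, h3]
  exact div_ne_zero (mul_ne_zero (hgen _ _) (hgen _ _))
    (mul_ne_zero (hgen _ _) (hgen _ _))

lemma nek_ne_zero (q1 q2 v1 v2 : K) (hq1 : q1 ≠ 0) (hq2 : q2 ≠ 0) (hv2 : v2 ≠ 0)
    (hgen : ∀ a b : ℤ, (1 : K) - v1 / v2 * q1 ^ a * q2 ^ b ≠ 0)
    (l : ℕ → ℕ) (L : ℕ) (m : ℕ → ℕ) (M : ℕ) :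
    nekrasov5d q1 q2 v1 v2 l L m M ≠ 0 := by
  unfold nekrasov5d
  refine mul_ne_zero (mul_ne_zero ?_ ?_) ?_
  · refine Finset.prod_ne_zero_iff.mpr fun i _ => Finset.prod_ne_zero_iff.mpr fun j _ => ?_
    have : q1 * q2 * (v1 * q1 ^ i * q2 ^ j) / v2
        = v1 / v2 * q1 ^ ((i : ℤ) + 1) * q2 ^ ((j : ℤ) + 1) := by
      rw [zpow_add₀ hq1, zpow_add₀ hq2, zpow_one, zpow_one, zpow_natCast, zpow_natCast]
      field_simp
    rw [this]; exact hgen _ _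
  · refine Finset.prod_ne_zero_iff.mpr fun k _ => Finset.prod_ne_zero_iff.mpr fun o _ => ?_
    have : v1 / (v2 * q1 ^ k * q2 ^ o) = v1 / v2 * q1 ^ (-(k : ℤ)) * q2 ^ (-(o : ℤ)) := by
      rw [zpow_neg, zpow_neg, zpow_natCast, zpow_natCast]
      field_simp
    rw [this]; exact hgen _ _
  · refine Finset.prod_ne_zero_iff.mpr fun i _ => Finset.prod_ne_zero_iff.mpr fun j _ =>
      Finset.prod_ne_zero_iff.mpr fun k _ => Finset.prod_ne_zero_iff.mpr fun o _ => ?_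
    rw [hexp q1 q2 v1 v2 hq1 hq2 hv2]
    exact Sab_ne q1 q2 v1 v2 hq1 hq2 hv2 hgen _ _


end aux

/-- The 5d Nekrasov factor satisfies the recursion
`N(v₁,λ | v₂,μ+▪)/N(v₁,λ | v₂,μ) = 𝒴_{λ,v₁}(χ_{v₂}(▪))` for any box `▪` addable to `μ`
(at row `r`, i.e. `▪ = (r, m r)` with `r = 0` or `m r < m (r−1)`), where
`𝒴_{λ,v}(y) = (1 − v/y)·∏_{□∈λ} 𝒮(χ_v(□)/y)`. -/
theorem nekrasov5d_add_box_recursion {K : Type*} [Field K] (q1 q2 v1 v2 : K)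
    (hq1 : q1 ≠ 0) (hq2 : q2 ≠ 0) (hv1 : v1 ≠ 0) (hv2 : v2 ≠ 0)
    (hgen : ∀ a b : ℤ, (1 : K) - v1 / v2 * q1 ^ a * q2 ^ b ≠ 0)
    (l : ℕ → ℕ) (L : ℕ) (hl : ∀ i, l (i + 1) ≤ l i) (hlL : ∀ i, L ≤ i → l i = 0)
    (m : ℕ → ℕ) (M : ℕ) (hm : ∀ i, m (i + 1) ≤ m i) (hmM : ∀ i, M ≤ i → m i = 0)
    (r : ℕ) (hr : r = 0 ∨ m r < m (r - 1)) :
    nekrasov5d q1 q2 v1 v2 l L (Function.update m r (m r + 1)) (M + 1) /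
        nekrasov5d q1 q2 v1 v2 l L m M =
      (1 - v1 / (v2 * q1 ^ r * q2 ^ (m r))) *
        ∏ i ∈ Finset.range L, ∏ j ∈ Finset.range (l i),
          Sab q1 q2 ((v1 * q1 ^ i * q2 ^ j) / (v2 * q1 ^ r * q2 ^ (m r))) := by

  have hrM : r ≤ M := by
    rcases hr with rfl | h
    · exact Nat.zero_le M
    · by_contra hc
      push_neg at hc
      have h0 : m (r - 1) = 0 := hmM _ (by omega)
      omega
  have hM0 : m M = 0 := hmM M le_rfl
  have key : nekrasov5d q1 q2 v1 v2 l L (Function.update m r (m r + 1)) (M + 1)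
      = nekrasov5d q1 q2 v1 v2 l L m M *
        ((1 - v1 / (v2 * q1 ^ r * q2 ^ (m r))) *
          ∏ i ∈ Finset.range L, ∏ j ∈ Finset.range (l i),
            Sab q1 q2 ((v1 * q1 ^ i * q2 ^ j) / (v2 * q1 ^ r * q2 ^ (m r)))) := by
    unfold nekrasov5d
    rw [prod_update_key (fun k o => 1 - v1 / (v2 * q1 ^ k * q2 ^ o)) m M r hrM hM0]
    have hC : ∀ i j : ℕ,
        (∏ k ∈ Finset.range (M + 1), ∏ o ∈ Finset.range (Function.update m r (m r + 1) k),
          Sab q1 q2 ((v1 * q1 ^ i * q2 ^ j) / (v2 * q1 ^ k * q2 ^ o)))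
        = (∏ k ∈ Finset.range M, ∏ o ∈ Finset.range (m k),
            Sab q1 q2 ((v1 * q1 ^ i * q2 ^ j) / (v2 * q1 ^ k * q2 ^ o))) *
          Sab q1 q2 ((v1 * q1 ^ i * q2 ^ j) / (v2 * q1 ^ r * q2 ^ (m r))) := fun i j =>
      prod_update_key (fun k o => Sab q1 q2 ((v1 * q1 ^ i * q2 ^ j) / (v2 * q1 ^ k * q2 ^ o)))
        m M r hrM hM0
    rw [Finset.prod_congr rfl fun i _ => Finset.prod_congr rfl fun j _ => hC i j]
    simp only [Finset.prod_mul_distrib]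
    ring
  rw [key, mul_div_cancel_left₀ _ (nek_ne_zero q1 q2 v1 v2 hq1 hq2 hv2 hgen l L m M)]
end
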